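/- For each fixed t > 0 the map y ↦ ξ(t,y) is nondecreasing on ℝ; moreover, the Lebesgue measure ℓ(t) of the set {y ∈ ℝ : ū_x(y) ≤ −1/t} is finite, and for all x₁ < x₂ one has ξ(t,x₂) − ξ(t,x₁) ≥ (x₂ − x₁ − ℓ(t))/4. Consequently ξ(t,y) → ±∞ as y → ±∞ and ξ(t,·) : ℝ → ℝ is surjective. -/

import Mathlib

open MeasureTheory

/-- `φ(t,y) = (1/4) ∫_{{ū_x > -2/t}} sign(y-x) ū_x(x)² dx` for `t ≠ 0`, and the full
integral `φ(0,y) = (1/4) ∫_ℝ sign(y-x) ū_x(x)² dx` at `t = 0`. -/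
noncomputable def phiHS (w : ℝ → ℝ) (t y : ℝ) : ℝ :=
  if t = 0 then (1 / 4) * ∫ x : ℝ, Real.sign (y - x) * (w x) ^ 2
  else (1 / 4) * ∫ x in {x : ℝ | w x > -2 / t}, Real.sign (y - x) * (w x) ^ 2

/-- The characteristic `ξ(t,y) = y + t ū(y) + ∫₀ᵗ (t-s) φ(s,y) ds`. -/
noncomputable def xiHS (u w : ℝ → ℝ) (t y : ℝ) : ℝ :=
  y + t * u y + ∫ s in (0 : ℝ)..t, (t - s) * phiHS w s y

/-!
With `g(z) = max(0, 1 + z/2)²` (`xiSlope`) and `K_s(v) = v² 𝟙{s v > -2}` (`cutoffEnergy`),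
`φ(s,y) = ¼ ∫ sign(y - x) K_s(ū_x(x)) dx` for `s ≥ 0`. The elementary identity
`∫₀ᵗ (t - s) K_s(v) ds = 2 (g(tv) - 1 - tv)` and Fubini give
`∫₀ᵗ (t - s) φ(s,y) ds = ½ ∫ sign(y - x) (g(t ū_x) - 1 - t ū_x) dx`. Since
`sign(x₂ - x) - sign(x₁ - x) = 2 𝟙_(x₁,x₂]` almost everywhere, this yields
`ξ(t,x₂) - ξ(t,x₁) = ∫_{x₁}^{x₂} g(t ū_x(x)) dx`.
Now `g ≥ 0`, and `g ≥ 1/4` off `{ū_x ≤ -1/t}`, which has finite measure since `ū_x ∈ L²`.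
So `ξ(t,·)` is nondecreasing and grows at least like `(x₂ - x₁ - ℓ(t))/4`; being continuous,
it is onto.
-/

open Filter Set

noncomputable def cutoffEnergy (s v : ℝ) : ℝ := if -2 < s * v then v ^ 2 else 0

noncomputable def xiSlope (z : ℝ) : ℝ := max 0 (1 + z / 2) ^ 2

lemma Real.measurable_sign : Measurable Real.sign :=
  Measurable.ite measurableSet_Iio measurable_const
    (Measurable.ite measurableSet_Ioi measurable_const measurable_const)

lemma Real.abs_sign_le_one (r : ℝ) : |Real.sign r| ≤ 1 := by
  rcases Real.sign_apply_eq r with h | h | h <;> simp [h]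

lemma sign_sub_sub_sign_sub_eq_indicator {a b x : ℝ} (hab : a ≤ b) (hxa : x ≠ a)
    (hxb : x ≠ b) : Real.sign (b - x) - Real.sign (a - x) = (Ioc a b).indicator 2 x := by
  rcases hxa.lt_or_gt with hxa | hax
  · rw [indicator_of_notMem fun h => hxa.not_gt h.1, Real.sign_of_pos (by linarith),
      Real.sign_of_pos (by linarith), sub_self]
  rcases hxb.lt_or_gt with hxb | hbx
  · rw [indicator_of_mem (show x ∈ Ioc a b from ⟨hax, hxb.le⟩), Real.sign_of_pos (by linarith),
      Real.sign_of_neg (by linarith)]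
    norm_num
  · rw [indicator_of_notMem fun h => hbx.not_ge h.2, Real.sign_of_neg (by linarith),
      Real.sign_of_neg (by linarith), sub_self]

theorem integral_sign_sub_mul_sub_eq_two_mul_integral {μ : Measure ℝ} [NullSingletonClass μ]
    {f : ℝ → ℝ} (hf : Integrable f μ) {a b : ℝ} (hab : a ≤ b) :
    (∫ x, Real.sign (b - x) * f x ∂μ) - ∫ x, Real.sign (a - x) * f x ∂μ =
      2 * ∫ x in a..b, f x ∂μ := by
  have hint (c : ℝ) : Integrable (fun x => Real.sign (c - x) * f x) μ :=
    hf.bdd_mul (Real.measurable_sign.comp (by fun_prop)).aestronglyMeasurable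
      (ae_of_all _ fun x => Real.abs_sign_le_one (c - x))
  rw [← integral_sub (hint b) (hint a), intervalIntegral.integral_of_le hab,
    ← integral_indicator measurableSet_Ioc, ← integral_const_mul]
  refine integral_congr_ae ?_
  filter_upwards [(countable_singleton a).ae_notMem μ, (countable_singleton b).ae_notMem μ]
    with x (hxa : x ≠ a) (hxb : x ≠ b)
  rw [← sub_mul, sign_sub_sub_sign_sub_eq_indicator hab hxa hxb]
  by_cases hx : x ∈ Ioc a b <;> simp [hx]

lemma MeasureTheory.MemLp.intervalIntegrable {f : ℝ → ℝ} {p : ENNReal}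
    (hf : MemLp f p volume) (hp : 1 ≤ p) (a b : ℝ) : IntervalIntegrable f volume a b :=
  ((hf.locallyIntegrable hp).integrableOn_isCompact isCompact_uIcc).intervalIntegrable

lemma MeasureTheory.MemLp.measure_le_lt_top {α : Type*} [MeasurableSpace α] {μ : Measure α}
    {f : α → ℝ} (hf : MemLp f 2 μ) {c : ℝ} (hc : c < 0) : μ {x | f x ≤ c} < ⊤ :=
  (measure_mono fun x (hx : f x ≤ c) => show c ^ 2 ≤ f x ^ 2 by nlinarith).trans_lt
    (hf.integrable_sq.measure_ge_lt_top (by nlinarith))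

lemma mul_sub_measureReal_le_integral {f : ℝ → ℝ} {B : Set ℝ} {a b c : ℝ}
    (hB : MeasurableSet B) (hBfin : volume B ≠ ⊤) (hab : a ≤ b)
    (hf : IntervalIntegrable f volume a b) (hf0 : ∀ x, 0 ≤ f x) (hc0 : 0 ≤ c)
    (hc : ∀ x ∉ B, c ≤ f x) :
    c * (b - a - volume.real B) ≤ ∫ x in a..b, f x := by
  rw [intervalIntegral.integral_of_le hab]
  have hIoc : volume.real (Ioc a b) = b - a := by simp [hab]
  calc c * (b - a - volume.real B)
      ≤ c * volume.real (Ioc a b \ B) := by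
        gcongr
        rw [← hIoc]
        exact le_measureReal_sdiff hBfin
    _ = ∫ _ in Ioc a b \ B, c := by rw [setIntegral_const, smul_eq_mul, mul_comm]
    _ ≤ ∫ x in Ioc a b \ B, f x :=
        setIntegral_mono_on
          (integrableOn_const ((measure_mono sdiff_subset).trans_lt measure_Ioc_lt_top).ne)
          (hf.1.mono_set sdiff_subset) (measurableSet_Ioc.diff hB) fun x hx => hc x hx.2
    _ ≤ ∫ x in Ioc a b, f x :=
        setIntegral_mono_set hf.1 (ae_of_all _ hf0) sdiff_subset.eventuallyLE

lemma tendsto_atTop_of_forall_sub_ge {f : ℝ → ℝ} {ℓ c : ℝ} (hc : 0 < c)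
    (h : ∀ x₁ x₂, x₁ < x₂ → (x₂ - x₁ - ℓ) / c ≤ f x₂ - f x₁) : Tendsto f atTop atTop := by
  refine tendsto_atTop_mono' atTop (f₁ := fun y => f 0 + (y - ℓ) / c) ?_ ?_
  · filter_upwards [eventually_gt_atTop 0] with y hy
    have := h 0 y hy
    rw [sub_zero] at this
    linarith
  · exact tendsto_atTop_add_const_left _ _
      ((tendsto_atTop_add_const_right _ _ tendsto_id).atTop_div_const hc)

lemma tendsto_atBot_of_forall_sub_ge {f : ℝ → ℝ} {ℓ c : ℝ} (hc : 0 < c)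
    (h : ∀ x₁ x₂, x₁ < x₂ → (x₂ - x₁ - ℓ) / c ≤ f x₂ - f x₁) : Tendsto f atBot atBot := by
  refine tendsto_atBot_mono' atBot (f₁ := fun y => f 0 + (y + ℓ) / c) ?_ ?_
  · filter_upwards [eventually_lt_atBot 0] with y hy
    have := h y 0 hy
    rw [show (0 - y - ℓ) / c = -((y + ℓ) / c) by ring] at this
    linarith
  · exact tendsto_atBot_add_const_left _ _
      ((tendsto_atBot_add_const_right _ _ tendsto_id).atBot_div_const hc)

lemma xiSlope_nonneg (z : ℝ) : 0 ≤ xiSlope z := sq_nonneg _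

lemma quarter_le_xiSlope {z : ℝ} (hz : -1 < z) : 1 / 4 ≤ xiSlope z := by
  rw [xiSlope, max_eq_right (by linarith)]
  nlinarith

lemma xiSlope_sub_nonneg (z : ℝ) : 0 ≤ xiSlope z - 1 - z := by
  rcases le_total 0 (1 + z / 2) with h | h
  · rw [xiSlope, max_eq_right h]; nlinarith [sq_nonneg z]
  · rw [xiSlope, max_eq_left h]; linarith

lemma xiSlope_sub_le (z : ℝ) : xiSlope z - 1 - z ≤ z ^ 2 / 4 := by
  rcases le_total 0 (1 + z / 2) with h | h
  · rw [xiSlope, max_eq_right h]; nlinarith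
  · rw [xiSlope, max_eq_left h]; nlinarith [sq_nonneg (z / 2 + 1)]

lemma continuous_xiSlope : Continuous xiSlope := by
  unfold xiSlope; fun_prop

lemma cutoffEnergy_nonneg (s v : ℝ) : 0 ≤ cutoffEnergy s v := by
  unfold cutoffEnergy; split_ifs <;> positivity

lemma cutoffEnergy_le_sq (s v : ℝ) : cutoffEnergy s v ≤ v ^ 2 := by
  unfold cutoffEnergy; split_ifs
  exacts [le_rfl, sq_nonneg v]

lemma measurable_cutoffEnergy : Measurable (Function.uncurry cutoffEnergy) :=
  Measurable.ite (measurableSet_lt measurable_const (by fun_prop)) (by fun_prop) measurable_const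

lemma integral_sub_mul_cutoffEnergy_of_iff_lt {t v τ : ℝ} (ht : 0 ≤ t) (hτ : τ ∈ Icc 0 t)
    (hiff : ∀ s ∈ Ioc 0 t, s ≠ τ → (-2 < s * v ↔ s < τ)) :
    ∫ s in (0 : ℝ)..t, (t - s) * cutoffEnergy s v = (t * τ - τ ^ 2 / 2) * v ^ 2 := by
  calc ∫ s in (0 : ℝ)..t, (t - s) * cutoffEnergy s v
      = ∫ s in (0 : ℝ)..t, {s | s ≤ τ}.indicator (fun s => (t - s) * v ^ 2) s := by
        refine intervalIntegral.integral_congr_ae ?_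
        filter_upwards [(countable_singleton τ).ae_notMem volume] with s (hsτ : s ≠ τ) hs
        rw [uIoc_of_le ht] at hs
        by_cases h : s < τ
        · rw [indicator_of_mem (show s ∈ {s | s ≤ τ} from h.le), cutoffEnergy,
            if_pos ((hiff s hs hsτ).2 h)]
        · rw [indicator_of_notMem (show s ∉ {s | s ≤ τ} from fun h' => h (h'.lt_of_ne hsτ)),
            cutoffEnergy, if_neg (fun h' => h ((hiff s hs hsτ).1 h')), mul_zero]
    _ = ∫ s in (0 : ℝ)..τ, (t - s) * v ^ 2 := intervalIntegral.integral_indicator hτ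
    _ = (t * τ - τ ^ 2 / 2) * v ^ 2 := by
        rw [intervalIntegral.integral_mul_const, intervalIntegral.integral_sub
          intervalIntegrable_const intervalIntegral.intervalIntegrable_id, integral_id,
          intervalIntegral.integral_const, smul_eq_mul]
        ring

lemma integral_sub_mul_cutoffEnergy {t : ℝ} (ht : 0 < t) (v : ℝ) :
    ∫ s in (0 : ℝ)..t, (t - s) * cutoffEnergy s v = 2 * (xiSlope (t * v) - 1 - t * v) := by
  -- the energy is switched off at time `-2 / v` if that comes before `t`
  by_cases hv : -2 ≤ t * v
  · rw [integral_sub_mul_cutoffEnergy_of_iff_lt ht.le ⟨ht.le, le_rfl⟩ fun s hs hsne => ?_,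
      xiSlope, max_eq_right (by linarith)]
    · ring
    · have hst : s < t := lt_of_le_of_ne hs.2 hsne
      refine ⟨fun _ => hst, fun _ => ?_⟩
      rcases le_total 0 v with h | h <;> nlinarith [hs.1]
  · replace hv := not_le.1 hv
    have hv0 : v < 0 := by nlinarith
    have hτ : -2 / v ∈ Icc 0 t :=
      ⟨div_nonneg_of_nonpos (by norm_num) hv0.le, by rw [div_le_iff_of_neg hv0]; linarith⟩
    rw [integral_sub_mul_cutoffEnergy_of_iff_lt ht.le hτ
      fun s _ _ => (lt_div_iff_of_neg hv0).symm, xiSlope, max_eq_left (by linarith)]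
    field_simp [hv0.ne]
    ring

section Characteristic

variable {w : ℝ → ℝ}

lemma phiHS_congr_ae {w' : ℝ → ℝ} (h : w =ᵐ[volume] w') : phiHS w = phiHS w' := by
  ext t y
  have hset : {x | w x > -2 / t} =ᵐ[volume] {x | w' x > -2 / t} :=
    eventuallyEq_set.2 (h.mono fun x hx => by simp only [mem_ofPred_eq, hx])
  unfold phiHS
  rw [Measure.restrict_congr_set hset]
  split_ifs
  · exact congrArg _ (integral_congr_ae (h.mono fun x hx => by simp only [hx]))
  · exact congrArg _
      (integral_congr_ae (ae_restrict_of_ae (h.mono fun x hx => by simp only [hx])))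

lemma xiHS_congr_ae (u : ℝ → ℝ) {w' : ℝ → ℝ} (h : w =ᵐ[volume] w') :
    xiHS u w = xiHS u w' := by
  funext t y
  simp only [xiHS, phiHS_congr_ae h]

lemma phiHS_eq_integral_cutoffEnergy (hw : Measurable w) {s : ℝ} (hs : 0 ≤ s) (y : ℝ) :
    phiHS w s y = (1 / 4) * ∫ x, Real.sign (y - x) * cutoffEnergy s (w x) := by
  rcases hs.eq_or_lt with rfl | hs
  · simp [phiHS, cutoffEnergy]
  · rw [phiHS, if_neg hs.ne', ← integral_indicator (measurableSet_lt measurable_const hw)]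
    congr 2 with x
    simp only [indicator_apply, mem_ofPred_eq, cutoffEnergy, div_lt_iff₀ hs, mul_comm (w x) s]
    split_ifs <;> simp

lemma integrable_sub_mul_sign_mul_cutoffEnergy (hw : Measurable w)
    (hw2 : Integrable (fun x => w x ^ 2)) (t y a b : ℝ) :
    Integrable
      (Function.uncurry fun s x => (t - s) * (Real.sign (y - x) * cutoffEnergy s (w x)))
      ((volume.restrict (uIoc a b)).prod volume) := by
  refine (Integrable.mul_prod (f := fun s => |t - s|) ?_ hw2).mono' ?_
    (ae_of_all _ fun ⟨s, x⟩ => ?_)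
  · exact (continuous_const.sub continuous_id).abs.integrableOn_uIoc
  · exact ((continuous_const.sub continuous_fst).measurable.mul
      ((Real.measurable_sign.comp (measurable_const.sub measurable_snd)).mul
        (measurable_cutoffEnergy.comp (measurable_fst.prodMk (hw.comp measurable_snd))))
      ).aestronglyMeasurable
  · simp only [Function.uncurry_apply_pair, norm_mul, Real.norm_eq_abs,
      abs_of_nonneg (cutoffEnergy_nonneg _ _)]
    calc |t - s| * (|Real.sign (y - x)| * cutoffEnergy s (w x))
        ≤ |t - s| * (1 * w x ^ 2) := by
          gcongr
          · exact cutoffEnergy_nonneg _ _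
          · exact Real.abs_sign_le_one _
          · exact cutoffEnergy_le_sq _ _
      _ = |t - s| * w x ^ 2 := by ring

lemma integral_sub_mul_phiHS (hw : Measurable w) (hw2 : Integrable (fun x => w x ^ 2))
    {t : ℝ} (ht : 0 < t) (y : ℝ) :
    ∫ s in (0 : ℝ)..t, (t - s) * phiHS w s y =
      (1 / 2) * ∫ x, Real.sign (y - x) * (xiSlope (t * w x) - 1 - t * w x) := by
  calc ∫ s in (0 : ℝ)..t, (t - s) * phiHS w s y
      = (1 / 4) * ∫ s in (0 : ℝ)..t, ∫ x,
          (t - s) * (Real.sign (y - x) * cutoffEnergy s (w x)) := by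
        rw [← intervalIntegral.integral_const_mul]
        refine intervalIntegral.integral_congr fun s hs => ?_
        rw [uIcc_of_le ht.le] at hs
        simp only [phiHS_eq_integral_cutoffEnergy hw hs.1, integral_const_mul]
        ring
    _ = (1 / 4) * ∫ x, ∫ s in (0 : ℝ)..t,
          (t - s) * (Real.sign (y - x) * cutoffEnergy s (w x)) := by
        rw [intervalIntegral_integral_swap
          (integrable_sub_mul_sign_mul_cutoffEnergy hw hw2 t y 0 t)]
    _ = _ := by
        simp only [mul_left_comm _ (Real.sign _), intervalIntegral.integral_const_mul,
          integral_sub_mul_cutoffEnergy ht]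
        rw [← integral_const_mul, ← integral_const_mul]
        congr 1 with x
        ring

lemma integrable_xiSlope_sub (hw : AEStronglyMeasurable w)
    (hw2 : Integrable (fun x => w x ^ 2)) (t : ℝ) :
    Integrable (fun x => xiSlope (t * w x) - 1 - t * w x) := by
  refine (hw2.const_mul (t ^ 2 / 4)).mono' ?_ (ae_of_all _ fun x => ?_)
  · exact ((continuous_xiSlope.comp_aestronglyMeasurable (hw.const_mul t)).sub
      aestronglyMeasurable_const).sub (hw.const_mul t)
  · rw [Real.norm_eq_abs, abs_of_nonneg (xiSlope_sub_nonneg _)]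
    linarith [xiSlope_sub_le (t * w x)]

lemma intervalIntegrable_xiSlope (hw2 : MemLp w 2 volume) (t a b : ℝ) :
    IntervalIntegrable (fun x => xiSlope (t * w x)) volume a b := by
  refine (((intervalIntegrable_const (c := (1 : ℝ))).add
    ((hw2.intervalIntegrable one_le_two a b).const_mul t)).add
    (integrable_xiSlope_sub hw2.1 hw2.integrable_sq t).intervalIntegrable).congr_ae
    (ae_of_all _ fun x => ?_)
  ring

variable {u : ℝ → ℝ} {t : ℝ}

theorem xiHS_sub_eq_integral_xiSlope (hw : Measurable w) (hw2 : MemLp w 2 volume)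
    (hu : ∀ a b, a ≤ b → u b - u a = ∫ x in a..b, w x) (ht : 0 < t) (x₁ x₂ : ℝ) :
    xiHS u w t x₂ - xiHS u w t x₁ = ∫ x in x₁..x₂, xiSlope (t * w x) := by
  wlog h : x₁ ≤ x₂ generalizing x₁ x₂
  · rw [intervalIntegral.integral_symm, ← this x₂ x₁ (le_of_not_ge h)]
    ring
  have hH := integrable_xiSlope_sub hw.aestronglyMeasurable hw2.integrable_sq t
  have hwint := hw2.intervalIntegrable one_le_two x₁ x₂
  calc xiHS u w t x₂ - xiHS u w t x₁
      = (x₂ - x₁) + t * (u x₂ - u x₁) + (1 / 2) *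
          ((∫ x, Real.sign (x₂ - x) * (xiSlope (t * w x) - 1 - t * w x)) -
            ∫ x, Real.sign (x₁ - x) * (xiSlope (t * w x) - 1 - t * w x)) := by
        simp only [xiHS, integral_sub_mul_phiHS hw hw2.integrable_sq ht]
        ring
    _ = ∫ x in x₁..x₂, ((1 + t * w x) + (xiSlope (t * w x) - 1 - t * w x)) := by
        rw [integral_sign_sub_mul_sub_eq_two_mul_integral hH h, hu x₁ x₂ h,
          intervalIntegral.integral_add
            (intervalIntegrable_const.add (hwint.const_mul t)) hH.intervalIntegrable,
          intervalIntegral.integral_add intervalIntegrable_const (hwint.const_mul t),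
          intervalIntegral.integral_const, intervalIntegral.integral_const_mul, smul_eq_mul]
        ring
    _ = ∫ x in x₁..x₂, xiSlope (t * w x) := by
        congr 1 with x
        ring

lemma monotone_xiHS (hw : Measurable w) (hw2 : MemLp w 2 volume)
    (hu : ∀ a b, a ≤ b → u b - u a = ∫ x in a..b, w x) (ht : 0 < t) :
    Monotone (xiHS u w t) := fun a b hab =>
  sub_nonneg.1 <| xiHS_sub_eq_integral_xiSlope hw hw2 hu ht a b ▸
    intervalIntegral.integral_nonneg hab fun _ _ => xiSlope_nonneg _

lemma continuous_xiHS (hw : Measurable w) (hw2 : MemLp w 2 volume)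
    (hu : ∀ a b, a ≤ b → u b - u a = ∫ x in a..b, w x) (ht : 0 < t) :
    Continuous (xiHS u w t) := by
  have hprim : xiHS u w t = fun y => xiHS u w t 0 + ∫ x in (0 : ℝ)..y, xiSlope (t * w x) := by
    funext y
    linarith [xiHS_sub_eq_integral_xiSlope hw hw2 hu ht 0 y]
  rw [hprim]
  exact continuous_const.add
    (intervalIntegral.continuous_primitive (intervalIntegrable_xiSlope hw2 t) 0)

lemma sub_measure_div_four_le_xiHS_sub (hw : Measurable w) (hw2 : MemLp w 2 volume)
    (hu : ∀ a b, a ≤ b → u b - u a = ∫ x in a..b, w x) (ht : 0 < t) {x₁ x₂ : ℝ}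
    (h : x₁ ≤ x₂) :
    (x₂ - x₁ - (volume {y | w y ≤ -1 / t}).toReal) / 4 ≤ xiHS u w t x₂ - xiHS u w t x₁ := by
  have := mul_sub_measureReal_le_integral (measurableSet_le hw measurable_const)
    (hw2.measure_le_lt_top (c := -1 / t) (div_neg_of_neg_of_pos (by norm_num) ht)).ne h
    (intervalIntegrable_xiSlope hw2 t x₁ x₂) (fun x => xiSlope_nonneg _) (by norm_num)
    fun x hx => quarter_le_xiSlope (by simpa [div_lt_iff₀ ht, mul_comm] using hx)
  rw [measureReal_def] at this
  rw [xiHS_sub_eq_integral_xiSlope hw hw2 hu ht]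
  linarith

end Characteristic

/-- For each `t > 0`: `ξ(t,·)` is nondecreasing, the set `{ū_x ≤ -1/t}` has finite
measure `ℓ(t)`, `ξ(t,x₂) - ξ(t,x₁) ≥ (x₂ - x₁ - ℓ(t))/4`, and consequently
`ξ(t,·)` tends to `±∞` at `±∞` and is surjective. -/
theorem xi_monotone_surjective (ubar ubarx : ℝ → ℝ)
    (hAC : ∀ a b : ℝ, a ≤ b → ubar b - ubar a = ∫ x in a..b, ubarx x)
    (hL2 : MemLp ubarx 2 (volume : Measure ℝ)) :
    ∀ t : ℝ, 0 < t →
      Monotone (fun y => xiHS ubar ubarx t y) ∧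
      volume {y : ℝ | ubarx y ≤ -1 / t} < ⊤ ∧
      (∀ x₁ x₂ : ℝ, x₁ < x₂ →
        (x₂ - x₁ - (volume {y : ℝ | ubarx y ≤ -1 / t}).toReal) / 4 ≤
          xiHS ubar ubarx t x₂ - xiHS ubar ubarx t x₁) ∧
      Filter.Tendsto (fun y => xiHS ubar ubarx t y) Filter.atTop Filter.atTop ∧
      Filter.Tendsto (fun y => xiHS ubar ubarx t y) Filter.atBot Filter.atBot ∧
      Function.Surjective (fun y => xiHS ubar ubarx t y) := by
  intro t ht
  obtain ⟨w, hw, hwae⟩ := hL2.aestronglyMeasurable.aemeasurable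
  have hw2 : MemLp w 2 volume := hL2.ae_eq hwae
  have hu (a b : ℝ) (hab : a ≤ b) : ubar b - ubar a = ∫ x in a..b, w x :=
    (hAC a b hab).trans (intervalIntegral.integral_congr_ae (hwae.mono fun x hx _ => hx))
  have hℓ : volume {y | ubarx y ≤ -1 / t} = volume {y | w y ≤ -1 / t} :=
    measure_congr (eventuallyEq_set.2 (hwae.mono fun x hx => by simp only [mem_ofPred_eq, hx]))
  have hbound (x₁ x₂ : ℝ) (h : x₁ < x₂) := sub_measure_div_four_le_xiHS_sub hw hw2 hu ht h.le
  have htop := tendsto_atTop_of_forall_sub_ge four_pos hbound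
  have hbot := tendsto_atBot_of_forall_sub_ge four_pos hbound
  rw [xiHS_congr_ae ubar hwae, hℓ]
  exact ⟨monotone_xiHS hw hw2 hu ht, hw2.measure_le_lt_top (div_neg_of_neg_of_pos (by norm_num) ht),
    hbound, htop, hbot, (continuous_xiHS hw hw2 hu ht).surjective htop hbot⟩
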